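/- arXiv:1704.07573 — 2 statements merged into one kernel-verified Lean document; each statement's English description precedes it below -/
import Mathlib

section
/- Let T be the uniform thinning matrix, T_{n,k} = 1/(n+1) for k ≤ n and T_{n,k} = 0 for k > n. Let ν be a probability distribution on ℕ whose support is an initial segment (if ν_m = 0 for some m then ν_n = 0 for all n ≥ m), and let Q be a condensation matrix for (ν, T). Then (i) for every n ≥ 1 with ν_{n-1} > 0, (n/(n+1)) · ν_n = ν_{n-1} · (Q_{n-1,n} / Q_{n-1,n-1}); and (ii) for every n ≥ 1 with ν_{n-1} > 0, ν_n = (n+1) · ν_0 · ∏_{j=0}^{n-1} (Q_{j,j+1} / Q_{j,j}). -/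
/-!
Dividing two balance equations with the same row `k` cancels the unknown `ν' k`, so every
ratio of entries of a row of `Q` is a ratio of entries of `ν T`. For uniform thinning, rows
`m` and `m + 1` of `T` agree at column `m` up to the normalising factors `1/(m+1)` and
`1/(m+2)`, so `w m := ν m / (m+1)` satisfies `w (m+1) = w m * (Q m (m+1) / Q m m)` as long as
`ν m ≠ 0`; the support hypothesis guarantees this below any `n` with `ν (n-1) > 0`.
-/

open Finset

theorem eq_mul_prod_range_of_succ {M : Type*} [CommMonoid M] {w r : ℕ → M} {n : ℕ}
    (h : ∀ m < n, w (m + 1) = w m * r m) : w n = w 0 * ∏ j ∈ range n, r j := by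
  induction n with
  | zero => simp
  | succ n ih =>
    rw [prod_range_succ, ← mul_assoc, ← ih fun m hm => h m (by omega), h n n.lt_succ_self]

theorem div_eq_div_of_balance {ν ν' : ℕ → ℝ} {T Q : ℕ → ℕ → ℝ}
    (hbal : ∀ k n, ν' k * Q k n = ν n * T n k) {k n m : ℕ} (h : ν m * T m k ≠ 0) :
    Q k n / Q k m = ν n * T n k / (ν m * T m k) := by
  have hν' : ν' k ≠ 0 := left_ne_zero_of_mul (hbal k m ▸ h)
  rw [← hbal, ← hbal, mul_div_mul_left _ _ hν']

theorem succ_div_eq_of_balance_uniform {ν ν' : ℕ → ℝ} {T Q : ℕ → ℕ → ℝ}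
    (hT : ∀ n k : ℕ, T n k = if k ≤ n then 1 / ((n : ℝ) + 1) else 0)
    (hbal : ∀ k n, ν' k * Q k n = ν n * T n k) {m : ℕ} (hm : ν m ≠ 0) :
    ν (m + 1) / ((m : ℝ) + 2) = ν m / ((m : ℝ) + 1) * (Q m (m + 1) / Q m m) := by
  have hTm : ∀ n, m ≤ n → T n m = 1 / ((n : ℝ) + 1) := fun n hn => by rw [hT, if_pos hn]
  have hw : ν m / ((m : ℝ) + 1) ≠ 0 := div_ne_zero hm (by positivity)
  rw [div_eq_div_of_balance hbal (by rw [hTm m le_rfl, ← div_eq_mul_one_div]; exact hw),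
    hTm m le_rfl, hTm (m + 1) m.le_succ]
  push_cast
  field_simp
  ring

theorem stmt10_general
    (T : ℕ → ℕ → ℝ)
    (hT : ∀ n k : ℕ, T n k = if k ≤ n then 1 / ((n : ℝ) + 1) else 0)
    (ν : ℕ → ℝ)
    (hsupp : ∀ m n : ℕ, ν m = 0 → m ≤ n → ν n = 0)
    (ν' : ℕ → ℝ)
    (Q : ℕ → ℕ → ℝ)
    (hbal : ∀ k n, ν' k * Q k n = ν n * T n k) :
    (∀ n : ℕ, 1 ≤ n → 0 < ν (n - 1) →
      ((n : ℝ) / ((n : ℝ) + 1)) * ν n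
        = ν (n - 1) * (Q (n - 1) n / Q (n - 1) (n - 1))) ∧
    (∀ n : ℕ, 1 ≤ n → 0 < ν (n - 1) →
      ν n = ((n : ℝ) + 1) * ν 0 * ∏ j ∈ Finset.range n, (Q j (j + 1) / Q j j)) := by
  have step := fun m hm => succ_div_eq_of_balance_uniform (Q := Q) hT hbal (m := m) hm
  refine ⟨fun n hn hpos => ?_, fun n hn hpos => ?_⟩
  · obtain ⟨m, rfl⟩ := Nat.exists_eq_add_of_le' hn
    have h := step m (by simpa using hpos.ne')
    simp only [Nat.add_sub_cancel] at h ⊢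
    push_cast at h ⊢
    field_simp at h ⊢
    linear_combination h
  · have hne : ∀ m < n, ν m ≠ 0 := fun m hm h0 => hpos.ne' (hsupp m (n - 1) h0 (by omega))
    have hw := eq_mul_prod_range_of_succ (w := fun m => ν m / ((m : ℝ) + 1)) fun m hm => by
      push_cast; rw [add_assoc, one_add_one_eq_two]; exact step m (hne m hm)
    simp only [Nat.cast_zero, zero_add, div_one] at hw
    rw [div_eq_iff (by positivity)] at hw
    rw [hw]
    ring

/-- For the uniform thinning matrix `T n k = 1/(n+1)` for `k ≤ n`
(and `0` for `k > n`), a probability distribution `ν` whose support is an initial segment,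
and a condensation matrix `Q` for `(ν, T)`:
(i) for every `n ≥ 1` with `ν (n-1) > 0`,
`(n/(n+1)) * ν n = ν (n-1) * (Q (n-1) n / Q (n-1) (n-1))`; and
(ii) for every `n ≥ 1` with `ν (n-1) > 0`,
`ν n = (n+1) * ν 0 * ∏_{j=0}^{n-1} (Q j (j+1) / Q j j)`. -/
theorem stmt10
    (T : ℕ → ℕ → ℝ)
    (hT : ∀ n k : ℕ, T n k = if k ≤ n then 1 / ((n : ℝ) + 1) else 0)
    (ν : ℕ → ℝ) (hν0 : ∀ n, 0 ≤ ν n) (hν1 : ∑' n, ν n = 1)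
    (hsupp : ∀ m n : ℕ, ν m = 0 → m ≤ n → ν n = 0)
    (ν' : ℕ → ℝ) (hν' : ∀ k, ν' k = ∑' n, ν n * T n k)
    (Q : ℕ → ℕ → ℝ)
    (hQ0 : ∀ k n, 0 ≤ Q k n) (hQ1 : ∀ k, ∑' n, Q k n = 1)
    (hbal : ∀ k n, ν' k * Q k n = ν n * T n k) :
    (∀ n : ℕ, 1 ≤ n → 0 < ν (n - 1) →
      ((n : ℝ) / ((n : ℝ) + 1)) * ν n
        = ν (n - 1) * (Q (n - 1) n / Q (n - 1) (n - 1))) ∧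
    (∀ n : ℕ, 1 ≤ n → 0 < ν (n - 1) →
      ν n = ((n : ℝ) + 1) * ν 0 * ∏ j ∈ Finset.range n, (Q j (j + 1) / Q j j)) :=
  stmt10_general T hT ν hsupp ν' Q hbal
end

section
/- Fix r ∈ ℕ with r ≥ 1, p ∈ (0,1) and q ∈ (0,1), and set p' = (1-q)p. Let ν be the negative binomial distribution with parameters r and p, ν_n = C(r+n-1, n) p^n (1-p)^r, and let T be the independent q-thinning matrix, T_{n,k} = C(n,k) q^k (1-q)^{n-k} for k ≤ n, T_{n,k} = 0 for k > n. Then (i) the thinning ν' = νT is the negative binomial distribution with parameters r and p̃ = qp/(1-p'), i.e. ν'_k = C(r+k-1, k) p̃^k (1-p̃)^r for all k; and (ii) the matrix Q defined by Q_{k,n} = C(r+n-1, n-k) · (p')^{n-k} · (1-p')^{r+k} for n ≥ k and Q_{k,n} = 0 for n < k satisfies the balance equations ν'_k · Q_{k,n} = ν_n · T_{n,k} for all k ≤ n; equivalently, the splitting matrix Υ_{k,l} = Q_{k,k+l} = C(r+k+l-1, l) (p')^l (1-p')^{r+k} is the negative binomial distribution with parameters r+k and p' in each row k. -/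
/-!
Write `p' = (1 - q) p` and `n = k + m`. The identity
`C(r+n-1, n) C(n, k) = C(r+k-1, k) C(r+k+m-1, m)` (in terms of `Nat.multichoose`,
`r.multichoose n = C(r+n-1, n)`) factors `ν_n T_{n,k}` as `C(r+k-1, k) (qp)^k (1-p)^r` times the
negative binomial weight `C(r+k+m-1, m) p'^m` of `m`. Summing over `m` with the negative binomial
series `∑ₘ C(s+m-1, m) x^m = (1 - x)^(-s)` gives `ν'_k = C(r+k-1, k) (qp)^k (1-p)^r / (1-p')^(r+k)`,
which is negative binomial with parameter `qp / (1 - p')` because `1 - qp/(1-p') = (1-p)/(1-p')`.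
Dividing `ν_n T_{n,k}` by `ν'_k` leaves `C(r+k+m-1, m) p'^m (1-p')^(r+k) = Q_{k,n}`.
-/

open Finset

theorem Nat.multichoose_add_mul_choose (r m k : ℕ) :
    r.multichoose (m + k) * (m + k).choose k = r.multichoose k * (r + k).multichoose m := by
  rcases r with _ | s
  · rcases k with _ | k
    · simp
    · rw [← Nat.add_assoc, multichoose_zero_succ, multichoose_zero_succ]
      simp
  · rw [multichoose_eq, multichoose_eq, multichoose_eq, ← choose_symm_add,
      show s + 1 + (m + k) - 1 = s + k + m by omega, show s + 1 + k - 1 = s + k by omega,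
      show s + 1 + k + m - 1 = s + k + m by omega,
      choose_mul (Nat.le_add_right m k), Nat.add_sub_cancel_right, Nat.add_sub_cancel_left,
      Nat.mul_comm]

theorem hasSum_multichoose_mul_pow {𝕜 : Type*} [NormedDivisionRing 𝕜] [HasSummableGeomSeries 𝕜]
    (r : ℕ) {x : 𝕜} (hx : ‖x‖ < 1) :
    HasSum (fun n ↦ (r.multichoose n : 𝕜) * x ^ n) ((1 - x) ^ r)⁻¹ := by
  rcases r with _ | s
  · convert hasSum_single (f := fun n ↦ ((Nat.multichoose 0 n : ℕ) : 𝕜) * x ^ n) 0 ?_ using 1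
    · simp
    · intro n hn
      obtain ⟨n, rfl⟩ := Nat.exists_eq_succ_of_ne_zero hn
      simp [Nat.multichoose_zero_succ]
  · convert hasSum_choose_mul_geometric_of_norm_lt_one s hx using 2 with n
    · rw [Nat.multichoose_eq, Nat.add_right_comm, Nat.add_sub_cancel, Nat.add_comm,
        Nat.choose_symm_add]
    · simp

noncomputable section

def negBinomial (r : ℕ) (p : ℝ) (n : ℕ) : ℝ := r.multichoose n * p ^ n * (1 - p) ^ r

def binomialThinning (q : ℝ) (n k : ℕ) : ℝ :=
  if k ≤ n then n.choose k * q ^ k * (1 - q) ^ (n - k) else 0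

end

theorem binomialThinning_of_lt {q : ℝ} {n k : ℕ} (h : n < k) : binomialThinning q n k = 0 :=
  if_neg h.not_ge

theorem negBinomial_mul_binomialThinning_add (r m k : ℕ) (p q : ℝ) :
    negBinomial r p (m + k) * binomialThinning q (m + k) k =
      r.multichoose k * (q * p) ^ k * (1 - p) ^ r *
        ((r + k).multichoose m * ((1 - q) * p) ^ m) := by
  have hchoose := congrArg (Nat.cast : ℕ → ℝ) (Nat.multichoose_add_mul_choose r m k)
  push_cast at hchoose
  rw [negBinomial, binomialThinning, if_pos (Nat.le_add_left k m), Nat.add_sub_cancel,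
    mul_pow (1 - q), pow_add]
  linear_combination (p ^ (m + k) * (1 - p) ^ r * q ^ k * (1 - q) ^ m) * hchoose

section Thinning

variable {p q : ℝ}

theorem hasSum_negBinomial_mul_binomialThinning (r k : ℕ) (h : ‖(1 - q) * p‖ < 1) :
    HasSum (fun n ↦ negBinomial r p n * binomialThinning q n k)
      (r.multichoose k * (q * p) ^ k * (1 - p) ^ r / (1 - (1 - q) * p) ^ (r + k)) := by
  have hshift : HasSum (fun m ↦ negBinomial r p (m + k) * binomialThinning q (m + k) k)
      (r.multichoose k * (q * p) ^ k * (1 - p) ^ r * ((1 - (1 - q) * p) ^ (r + k))⁻¹) := by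
    simpa only [negBinomial_mul_binomialThinning_add] using
      (hasSum_multichoose_mul_pow (r + k) h).mul_left _
  have hhead : ∑ n ∈ range k, negBinomial r p n * binomialThinning q n k = 0 :=
    sum_eq_zero fun n hn ↦ by rw [binomialThinning_of_lt (mem_range.mp hn), mul_zero]
  rw [div_eq_mul_inv, ← add_zero (_ * _), ← hhead]
  exact (hasSum_nat_add_iff k).mp hshift

theorem multichoose_mul_div_eq_negBinomial (r k : ℕ) (h : 1 - (1 - q) * p ≠ 0) :
    r.multichoose k * (q * p) ^ k * (1 - p) ^ r / (1 - (1 - q) * p) ^ (r + k) =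
      negBinomial r (q * p / (1 - (1 - q) * p)) k := by
  have hcompl : 1 - q * p / (1 - (1 - q) * p) = (1 - p) / (1 - (1 - q) * p) := by
    rw [eq_div_iff h, sub_mul, div_mul_cancel₀ _ h]
    ring
  rw [negBinomial, hcompl, div_pow, div_pow, pow_add]
  field_simp

theorem hasSum_negBinomial_thinning (r k : ℕ) (h : ‖(1 - q) * p‖ < 1) :
    HasSum (fun n ↦ negBinomial r p n * binomialThinning q n k)
      (negBinomial r (q * p / (1 - (1 - q) * p)) k) := by
  have hne : 1 - (1 - q) * p ≠ 0 := sub_ne_zero.mpr fun h1 ↦ by simp [← h1] at h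
  rw [← multichoose_mul_div_eq_negBinomial r k hne]
  exact hasSum_negBinomial_mul_binomialThinning r k h

theorem negBinomial_thinned_mul_negBinomial (r k m : ℕ) (h : 1 - (1 - q) * p ≠ 0) :
    negBinomial r (q * p / (1 - (1 - q) * p)) k * negBinomial (r + k) ((1 - q) * p) m =
      negBinomial r p (m + k) * binomialThinning q (m + k) k := by
  rw [← multichoose_mul_div_eq_negBinomial r k h, negBinomial_mul_binomialThinning_add,
    negBinomial, div_mul_eq_mul_div, div_eq_iff (pow_ne_zero _ h)]
  ring

end Thinning

theorem stmt13_general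
    (r : ℕ) (p q : ℝ)
    (hp : p ∈ Set.Ioo (0 : ℝ) 1) (hq : q ∈ Set.Ioo (0 : ℝ) 1)
    (p' : ℝ) (hp' : p' = (1 - q) * p)
    (pt : ℝ) (hpt : pt = q * p / (1 - p'))
    (ν : ℕ → ℝ)
    (hν : ∀ n : ℕ, ν n = ((r + n - 1).choose n : ℝ) * p ^ n * (1 - p) ^ r)
    (T : ℕ → ℕ → ℝ)
    (hT : ∀ n k : ℕ, T n k =
      if k ≤ n then (n.choose k : ℝ) * q ^ k * (1 - q) ^ (n - k) else 0)
    (ν' : ℕ → ℝ) (hν' : ∀ k, ν' k = ∑' n, ν n * T n k)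
    (Q : ℕ → ℕ → ℝ)
    (hQ : ∀ k n : ℕ, Q k n =
      if k ≤ n then
        ((r + n - 1).choose (n - k) : ℝ) * p' ^ (n - k) * (1 - p') ^ (r + k)
      else 0) :
    (∀ k : ℕ, ν' k = ((r + k - 1).choose k : ℝ) * pt ^ k * (1 - pt) ^ r) ∧
    (∀ k n : ℕ, k ≤ n → ν' k * Q k n = ν n * T n k) ∧
    (∀ k l : ℕ,
      Q k (k + l) = ((r + k + l - 1).choose l : ℝ) * p' ^ l * (1 - p') ^ (r + k)) := by
  subst hp' hpt
  have hp'_norm : ‖(1 - q) * p‖ < 1 := by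
    obtain ⟨hp0, hp1⟩ := hp
    obtain ⟨hq0, hq1⟩ := hq
    rw [Real.norm_eq_abs, abs_lt]
    constructor <;> nlinarith
  have hν_eq : ν = negBinomial r p := funext fun n ↦ by rw [hν, negBinomial, Nat.multichoose_eq]
  have hT_eq : T = binomialThinning q := funext₂ fun n k ↦ hT n k
  have hν'_eq (k : ℕ) : ν' k = negBinomial r (q * p / (1 - (1 - q) * p)) k := by
    rw [hν', hν_eq, hT_eq, (hasSum_negBinomial_thinning r k hp'_norm).tsum_eq]
  have hQ_eq (k m : ℕ) : Q k (k + m) = negBinomial (r + k) ((1 - q) * p) m := by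
    rw [hQ, if_pos (Nat.le_add_right k m), Nat.add_sub_cancel_left, negBinomial,
      Nat.multichoose_eq, show r + (k + m) - 1 = r + k + m - 1 by omega]
  refine ⟨fun k ↦ by rw [hν'_eq, negBinomial, Nat.multichoose_eq], ?_, ?_⟩
  · rintro k n hkn
    obtain ⟨m, rfl⟩ := Nat.exists_eq_add_of_le hkn
    have hne : 1 - (1 - q) * p ≠ 0 := sub_ne_zero.mpr fun h1 ↦ by simp [← h1] at hp'_norm
    rw [hν'_eq, hQ_eq, hν_eq, hT_eq, Nat.add_comm k m,
      negBinomial_thinned_mul_negBinomial r k m hne]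
  · intro k l
    rw [hQ_eq, negBinomial, Nat.multichoose_eq, Nat.add_assoc]

/-- Negative binomial example: let `ν` be negative binomial with
parameters `r ≥ 1` and `p`, `T` the independent `q`-thinning, and `p' = (1-q)p`. Then
(i) the thinning `ν' = νT` is negative binomial with parameters `r` and
`p̃ = qp/(1-p')`; (ii) the matrix
`Q k n = C(r+n-1, n-k) p'^{n-k} (1-p')^{r+k}` for `n ≥ k` (and `0` for `n < k`) satisfies
the balance equations `ν' k * Q k n = ν n * T n k` for all `k ≤ n`; equivalently, the
splitting matrix `Υ k l = Q k (k+l) = C(r+k+l-1, l) p'^l (1-p')^{r+k}` is negative binomial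
with parameters `r+k` and `p'` in each row `k`. -/
theorem stmt13
    (r : ℕ) (hr : 1 ≤ r) (p q : ℝ)
    (hp : p ∈ Set.Ioo (0 : ℝ) 1) (hq : q ∈ Set.Ioo (0 : ℝ) 1)
    (p' : ℝ) (hp' : p' = (1 - q) * p)
    (pt : ℝ) (hpt : pt = q * p / (1 - p'))
    (ν : ℕ → ℝ)
    (hν : ∀ n : ℕ, ν n = ((r + n - 1).choose n : ℝ) * p ^ n * (1 - p) ^ r)
    (T : ℕ → ℕ → ℝ)
    (hT : ∀ n k : ℕ, T n k =
      if k ≤ n then (n.choose k : ℝ) * q ^ k * (1 - q) ^ (n - k) else 0)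
    (ν' : ℕ → ℝ) (hν' : ∀ k, ν' k = ∑' n, ν n * T n k)
    (Q : ℕ → ℕ → ℝ)
    (hQ : ∀ k n : ℕ, Q k n =
      if k ≤ n then
        ((r + n - 1).choose (n - k) : ℝ) * p' ^ (n - k) * (1 - p') ^ (r + k)
      else 0) :
    (∀ k : ℕ, ν' k = ((r + k - 1).choose k : ℝ) * pt ^ k * (1 - pt) ^ r) ∧
    (∀ k n : ℕ, k ≤ n → ν' k * Q k n = ν n * T n k) ∧
    (∀ k l : ℕ,
      Q k (k + l) = ((r + k + l - 1).choose l : ℝ) * p' ^ l * (1 - p') ^ (r + k)) :=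
  stmt13_general r p q hp hq p' hp' pt hpt ν hν T hT ν' hν' Q hQ
end
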